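/- Let x, y, r > 0 and w ∈ ℕ. The double series h(z) = ∑_{n=1}^∞ ∑_{m=w}^∞ e^{rm} (x² n² + y² e^{rm})^{-z/2} converges absolutely for every complex z with Re(z) > 3, and defines a holomorphic function on {z : Re(z) > 3}. -/

import Mathlib

/-!
Write `B = x²n² + y²e^{rm}`, so that the modulus of the `(n, m)` term is `e^{rm} B^{-Re z / 2}`.
Splitting `s / 2 = a + b` with `2a > 1` and `b > 1` and using `B ≥ x²n²`, `B ≥ y²e^{rm}` gives
`e^{rm} B^{-s/2} ≤ (x²n²)^{-a} (y²)^{-b} e^{(1-b)rm}`, a product of a convergent `p`-series in `n`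
and a convergent geometric series in `m`; this is absolute convergence for `Re z = s > 3`.
On a strip `s₀ < Re z < s₁` with `s₀ > 3` every term is bounded by `e^{rm} (B^{-s₀/2} + B^{-s₁/2})`,
so the series of entire functions converges uniformly there and its sum is holomorphic.
-/

open Complex

/-- The `(n, m)` term `e^{rm} (x²n² + y²e^{rm})^{-z/2}` of `h(z)`, with
`n = p.1 + 1 ≥ 1` and `m = p.2 + w ≥ w`. -/
noncomputable def hTerm (x y r : ℝ) (w : ℕ) (z : ℂ) (p : ℕ × ℕ) : ℂ :=
  (Real.exp (r * ((p.2 : ℝ) + (w : ℝ))) : ℂ) *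
    ((x ^ 2 * ((p.1 : ℝ) + 1) ^ 2 + y ^ 2 * Real.exp (r * ((p.2 : ℝ) + (w : ℝ))) : ℝ) : ℂ)
      ^ (-z / 2)

namespace Real

theorem add_rpow_neg_le_mul {u v a b : ℝ} (hu : 0 < u) (hv : 0 < v) (ha : 0 ≤ a) (hb : 0 ≤ b) :
    (u + v) ^ (-(a + b)) ≤ u ^ (-a) * v ^ (-b) := by
  rw [neg_add, rpow_add (by positivity)]
  exact mul_le_mul (rpow_le_rpow_of_nonpos hu (by linarith) (by linarith))
    (rpow_le_rpow_of_nonpos hv (by linarith) (by linarith)) (by positivity) (by positivity)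

theorem rpow_le_rpow_add_rpow {B t₀ t t₁ : ℝ} (hB : 0 < B) (h₀ : t₀ ≤ t) (h₁ : t ≤ t₁) :
    B ^ t ≤ B ^ t₀ + B ^ t₁ := by
  rcases le_total 1 B with hB1 | hB1
  · linarith [rpow_le_rpow_of_exponent_le hB1 h₁, rpow_nonneg hB.le t₀]
  · linarith [rpow_le_rpow_of_exponent_ge hB hB1 h₀, rpow_nonneg hB.le t₁]

end Real

noncomputable def hBase (x y r : ℝ) (w : ℕ) (p : ℕ × ℕ) : ℝ :=
  x ^ 2 * ((p.1 : ℝ) + 1) ^ 2 + y ^ 2 * Real.exp (r * ((p.2 : ℝ) + (w : ℝ)))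

section

variable {x y r : ℝ} {w : ℕ}

theorem hBase_pos (hx : 0 < x) (p : ℕ × ℕ) : 0 < hBase x y r w p := by
  unfold hBase; positivity

theorem hTerm_eq (z : ℂ) (p : ℕ × ℕ) :
    hTerm x y r w z p =
      (Real.exp (r * ((p.2 : ℝ) + (w : ℝ))) : ℂ) * (hBase x y r w p : ℂ) ^ (-z / 2) := rfl

theorem norm_hTerm (hx : 0 < x) (z : ℂ) (p : ℕ × ℕ) :
    ‖hTerm x y r w z p‖ = Real.exp (r * ((p.2 : ℝ) + (w : ℝ))) * hBase x y r w p ^ (-z.re / 2) := by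
  rw [hTerm_eq, norm_mul, Complex.norm_real, Real.norm_of_nonneg (Real.exp_nonneg _),
    Complex.norm_cpow_eq_rpow_re_of_pos (hBase_pos hx p)]
  simp [neg_div]

theorem differentiable_hTerm (hx : 0 < x) (p : ℕ × ℕ) :
    Differentiable ℂ (fun z => hTerm x y r w z p) := by
  simp_rw [hTerm_eq]
  exact (differentiable_const _).mul <| (differentiable_id.neg.div_const 2).const_cpow <|
    Or.inl <| Complex.ofReal_ne_zero.mpr (hBase_pos hx p).ne'

theorem summable_exp_mul_hBase_rpow (hx : 0 < x) (hy : 0 < y) (hr : 0 < r) {s : ℝ}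
    (hs : 3 < s) : Summable fun p : ℕ × ℕ =>
      Real.exp (r * ((p.2 : ℝ) + (w : ℝ))) * hBase x y r w p ^ (-s / 2) := by
  obtain ⟨a, b, ha, hb, hab⟩ : ∃ a b : ℝ, 1 / 2 < a ∧ 1 < b ∧ a + b = s / 2 :=
    ⟨(s - 1) / 4, (s + 1) / 4, by linarith, by linarith, by ring⟩
  have hn : Summable fun n : ℕ => (x ^ 2 * ((n : ℝ) + 1) ^ 2) ^ (-a) := by
    have : Summable fun n : ℕ => ((n : ℝ) + 1) ^ (-(2 * a)) := by
      simpa using (summable_nat_add_iff 1).mpr (Real.summable_nat_rpow.mpr (by linarith))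
    refine (this.mul_left ((x ^ 2) ^ (-a))).congr fun n => ?_
    rw [Real.mul_rpow (by positivity) (by positivity), ← Real.rpow_natCast ((n : ℝ) + 1),
      ← Real.rpow_mul (by positivity)]
    ring_nf
  have hm : Summable fun m : ℕ =>
      Real.exp (r * ((m : ℝ) + w)) * (y ^ 2 * Real.exp (r * ((m : ℝ) + w))) ^ (-b) := by
    have : Summable fun m : ℕ => Real.exp (r * (1 - b) * ((m : ℝ) + w)) :=
      Real.summable_exp_nat_mul_of_ge (by nlinarith) fun m => by simp
    refine (this.mul_left ((y ^ 2) ^ (-b))).congr fun m => ?_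
    rw [Real.mul_rpow (by positivity) (by positivity), ← Real.exp_mul, mul_left_comm,
      ← Real.exp_add]
    ring_nf
  refine (hn.mul_of_nonneg hm (fun _ => by positivity) fun _ => by positivity).of_nonneg_of_le
    (fun p => mul_nonneg (Real.exp_nonneg _) (Real.rpow_nonneg (hBase_pos hx p).le _)) fun p => ?_
  rw [mul_left_comm, show -s / 2 = -(a + b) by linarith]
  exact mul_le_mul_of_nonneg_left (Real.add_rpow_neg_le_mul (by positivity) (by positivity)
    (by linarith) (by linarith)) (Real.exp_nonneg _)

theorem differentiableOn_tsum_hTerm_re_Ioo (hx : 0 < x) (hy : 0 < y) (hr : 0 < r) {s₀ s₁ : ℝ}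
    (hs₀ : 3 < s₀) (hs₀₁ : s₀ ≤ s₁) :
    DifferentiableOn ℂ (fun z => ∑' p : ℕ × ℕ, hTerm x y r w z p) (re ⁻¹' Set.Ioo s₀ s₁) := by
  refine differentiableOn_tsum_of_summable_norm
    ((summable_exp_mul_hBase_rpow (w := w) hx hy hr (hs₀.trans_le hs₀₁)).add
      (summable_exp_mul_hBase_rpow (w := w) hx hy hr hs₀))
    (fun p => (differentiable_hTerm hx p).differentiableOn) (isOpen_Ioo.preimage continuous_re)
    fun p z ⟨hz₀, hz₁⟩ => ?_
  rw [norm_hTerm hx, ← mul_add]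
  gcongr
  exact Real.rpow_le_rpow_add_rpow (hBase_pos hx p) (by linarith) (by linarith)

end

theorem stmt7 (x y r : ℝ) (hx : 0 < x) (hy : 0 < y) (hr : 0 < r) (w : ℕ) :
    (∀ z : ℂ, 3 < z.re → Summable (fun p : ℕ × ℕ => ‖hTerm x y r w z p‖)) ∧
    DifferentiableOn ℂ (fun z => ∑' p : ℕ × ℕ, hTerm x y r w z p) {z : ℂ | 3 < z.re} := by
  refine ⟨fun z hz => ?_, differentiableOn_of_locally_differentiableOn fun z hz => ?_⟩
  · simpa only [norm_hTerm hx] using summable_exp_mul_hBase_rpow hx hy hr hz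
  · have hz : 3 < z.re := hz
    refine ⟨re ⁻¹' Set.Ioo ((3 + z.re) / 2) (z.re + 1), isOpen_Ioo.preimage continuous_re,
      ⟨by linarith, by linarith⟩, ?_⟩
    exact (differentiableOn_tsum_hTerm_re_Ioo hx hy hr (by linarith) (by linarith)).mono
      Set.inter_subset_right
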